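/- Let a, b, c, d be positive reals with a ≥ b, c ≥ d, a ≥ c, and a > b + c + d. Then for all real θ, φ, the quantity F(θ,φ) = a^2 e^{-iθ} + 2ab + b^2 e^{iθ} + c^2 e^{-iφ} + 2cd + d^2 e^{iφ} is nonzero. -/

import Mathlib

open Complex

/-- The function `F(θ,φ) = a²e^{-iθ} + 2ab + b²e^{iθ} + c²e^{-iφ} + 2cd + d²e^{iφ}`. -/
noncomputable def Fdimer (a b c d θ φ : ℝ) : ℂ :=
  a ^ 2 * Complex.exp (-θ * Complex.I) + 2 * a * b +
    b ^ 2 * Complex.exp (θ * Complex.I) +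
  c ^ 2 * Complex.exp (-φ * Complex.I) + 2 * c * d +
    d ^ 2 * Complex.exp (φ * Complex.I)

/-!
Writing `z = e^{iθ/2}` and `w = e^{iφ/2}`, one has `F(θ,φ) = u² + v²` with `u = a z⁻¹ + b z` and
`v = c w⁻¹ + d w`. On the unit circle `‖u‖ ≥ a - b` and `‖v‖ ≤ c + d`, so `a - b > c + d` gives
`‖v²‖ < ‖u²‖`, and `u²` cannot cancel `v²`.
-/

section NormedDivisionRing

variable {𝕜 : Type*} [NormedDivisionRing 𝕜]

theorem sq_add_sq_ne_zero_of_norm_lt {u v : 𝕜} (h : ‖v‖ < ‖u‖) : u ^ 2 + v ^ 2 ≠ 0 := by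
  intro hsum
  have hnorm : ‖u‖ ^ 2 = ‖v‖ ^ 2 := by
    rw [← norm_pow, ← norm_pow, eq_neg_of_add_eq_zero_left hsum, norm_neg]
  exact (pow_lt_pow_left₀ h (norm_nonneg v) two_ne_zero).ne' hnorm

variable {x : 𝕜} (hx : ‖x‖ = 1) (s t : 𝕜)
include hx

theorem norm_mul_inv_add_mul_le : ‖s * x⁻¹ + t * x‖ ≤ ‖s‖ + ‖t‖ := by
  simpa [norm_mul, norm_inv, hx] using norm_add_le (s * x⁻¹) (t * x)

theorem norm_sub_norm_le_norm_mul_inv_add_mul : ‖s‖ - ‖t‖ ≤ ‖s * x⁻¹ + t * x‖ := by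
  simpa [norm_mul, norm_inv, hx] using norm_sub_norm_le (s * x⁻¹) (-(t * x))

end NormedDivisionRing

theorem exp_mul_I_eq_sq (θ : ℝ) : exp (θ * I) = exp ((θ / 2 : ℝ) * I) ^ 2 := by
  rw [sq, ← exp_add]
  push_cast
  ring_nf

theorem Fdimer_eq_sq_add_sq (a b c d θ φ : ℝ) :
    Fdimer a b c d θ φ =
      (a * (exp ((θ / 2 : ℝ) * I))⁻¹ + b * exp ((θ / 2 : ℝ) * I)) ^ 2 +
        (c * (exp ((φ / 2 : ℝ) * I))⁻¹ + d * exp ((φ / 2 : ℝ) * I)) ^ 2 := by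
  have exp_neg_mul_I (θ : ℝ) : exp (-θ * I) = (exp ((θ / 2 : ℝ) * I) ^ 2)⁻¹ := by
    rw [neg_mul, exp_neg, exp_mul_I_eq_sq]
  rw [Fdimer, exp_neg_mul_I, exp_neg_mul_I, exp_mul_I_eq_sq θ, exp_mul_I_eq_sq φ]
  field_simp
  ring

theorem F_ne_zero_of_dominant_general (a b c d : ℝ)
    (hb : 0 < b) (hc : 0 < c) (hd : 0 < d)
    (hdom : b + c + d < a) :
    ∀ θ φ : ℝ, Fdimer a b c d θ φ ≠ 0 := by
  intro θ φ
  rw [Fdimer_eq_sq_add_sq]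
  apply sq_add_sq_ne_zero_of_norm_lt
  calc _ ≤ ‖(c : ℂ)‖ + ‖(d : ℂ)‖ := norm_mul_inv_add_mul_le (norm_exp_ofReal_mul_I _) _ _
    _ = c + d := by simp [abs_of_pos hc, abs_of_pos hd]
    _ < a - b := by linarith
    _ ≤ ‖(a : ℂ)‖ - ‖(b : ℂ)‖ := by simp [abs_of_pos hb, le_abs_self]
    _ ≤ _ := norm_sub_norm_le_norm_mul_inv_add_mul (norm_exp_ofReal_mul_I _) _ _

/-- If `a > b + c + d` (with `a ≥ b`, `c ≥ d`, `a ≥ c`), then `F(θ,φ)` has no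
zeros on the torus. -/
theorem F_ne_zero_of_dominant (a b c d : ℝ)
    (ha : 0 < a) (hb : 0 < b) (hc : 0 < c) (hd : 0 < d)
    (hab : b ≤ a) (hcd : d ≤ c) (hac : c ≤ a)
    (hdom : b + c + d < a) :
    ∀ θ φ : ℝ, Fdimer a b c d θ φ ≠ 0 :=
  F_ne_zero_of_dominant_general a b c d hb hc hd hdom
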